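/- arXiv:0712.1604 — 2 statements merged into one kernel-verified Lean document; each statement's English description precedes it below -/
import Mathlib

section
/- Let A be a commutative ring and (η_i)_{i≥0} a sequence in A with η_0 = 1 (set η_k = 0 for k < 0), and let (η'_i)_{i≥0} be its convolution inverse. Then for every n ≥ 1, η'_n = (−1)^{n(n+1)/2} · det(H_n), where H_n is the n×n matrix over A with entries (H_n)_{p,q} = η_{p+q+2−n} for 0 ≤ p, q ≤ n−1. (This is the algebraic content of the Myschenko-type formula of the paper: with η_i = a_{1,i} the coefficients of x·y^i in the formal group law of an oriented theory, η'_n is the cobordism class [P^n] of projective n-space, expressed as a signed Hankel determinant in the a_{1,i}.) -/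
open Finset Matrix

/-!
With `x_q = η'_{n-1-q}`, the rows of the linear system `H_n x = -η'_n e_{n-1}` are exactly the
convolution identities `∑ η_i η'_{k-i} = 0` for `k ≤ n`, the row `n - 1` missing the term
`η_0 η'_n`. Since `x_{n-1} = η'_0 = 1`, Cramer's rule gives `det H_n = -η'_n det H'`, where the
leading minor `H'` vanishes above its antidiagonal and has `η_0 = 1` on it, so that
`det H' = (-1)^{(n-1)(n-2)/2}`.
-/

theorem Matrix.det_of_eq_zero_above_antidiagonal {R : Type*} [CommRing R] {m : ℕ}
    (A : Matrix (Fin m) (Fin m) R) (hA : ∀ p q : Fin m, (p : ℕ) + q + 1 < m → A p q = 0) :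
    A.det = (-1) ^ (m * (m - 1) / 2) * ∏ i, A i i.rev := by
  rw [← sum_range_id]
  induction m with
  | zero => simp
  | succ k ih =>
    have hrow : ∀ j ≠ Fin.last k, A 0 j = 0 := fun j hj =>
      hA 0 j (by rw [Fin.val_zero]; have := Fin.val_lt_last hj; omega)
    have hminor : ∀ p q : Fin k, (p : ℕ) + q + 1 < k → A p.succ q.castSucc = 0 :=
      fun p q h => hA _ _ (by rw [Fin.val_succ, Fin.val_castSucc]; omega)
    rw [det_succ_row_zero,
      Fintype.sum_eq_single _ fun j hj => by rw [hrow j hj, mul_zero, zero_mul],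
      Fin.succAbove_last, ih (A.submatrix Fin.succ Fin.castSucc) hminor,
      Fin.prod_univ_succ, sum_range_succ, pow_add]
    simp only [Fin.val_last, Fin.rev_zero, Fin.rev_succ, submatrix_apply]
    ring

theorem Matrix.det_mul_apply_last_of_mulVec_eq_single {R : Type*} [CommRing R] {m : ℕ}
    (A : Matrix (Fin (m + 1)) (Fin (m + 1)) R) {x : Fin (m + 1) → R} {c : R}
    (hx : A *ᵥ x = Pi.single (Fin.last m) c) :
    A.det * x (Fin.last m) = c * (A.submatrix Fin.castSucc Fin.castSucc).det := by
  have h := congrFun (congrArg (· *ᵥ x) (adjugate_mul A)) (Fin.last m)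
  simp only [← mulVec_mulVec, hx, smul_mulVec, one_mulVec, mulVec_single] at h
  rw [← smul_eq_mul, ← Pi.smul_apply, ← h, Pi.smul_apply, op_smul_eq_mul, col_apply,
    adjugate_fin_succ_eq_det_submatrix, Fin.succAbove_last, ← two_mul, pow_mul]
  simp [mul_comm]

section ConvolutionInverse

variable {A : Type*} [CommRing A] {η η' : ℕ → A} {ηZ : ℤ → A}

theorem sum_range_sub_mul_eq_zero (hηZ : ∀ i : ℕ, ηZ (i : ℤ) = η i)
    (hconv : ∀ k : ℕ, 1 ≤ k → ∑ i ∈ range (k + 1), η i * η' (k - i) = 0) {k : ℕ} (hk : 1 ≤ k) :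
    ∑ r ∈ range (k + 1), ηZ (k - r) * η' r = 0 := by
  rw [← hconv k hk, ← sum_range_reflect (fun i => η i * η' (k - i))]
  refine sum_congr rfl fun r hr => ?_
  rw [mem_range] at hr
  rw [Nat.add_sub_cancel, Nat.sub_sub_self (by omega), ← hηZ, Nat.cast_sub (by omega)]

theorem sum_range_succ_sub_mul (hη0 : η 0 = 1) (hηZ : ∀ i : ℕ, ηZ (i : ℤ) = η i)
    (hηZneg : ∀ m : ℤ, m < 0 → ηZ m = 0)
    (hconv : ∀ k : ℕ, 1 ≤ k → ∑ i ∈ range (k + 1), η i * η' (k - i) = 0) {p N : ℕ} (hp : p < N) :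
    ∑ r ∈ range N, ηZ (p + 1 - r) * η' r = if p + 1 = N then -η' N else 0 := by
  have hfull := sum_range_sub_mul_eq_zero hηZ hconv (Nat.le_add_left 1 p)
  push_cast at hfull
  split_ifs with h
  · subst h
    rw [sum_range_succ, Nat.cast_add_one, sub_self, ← Nat.cast_zero, hηZ, hη0, one_mul] at hfull
    exact eq_neg_of_add_eq_zero_left hfull
  · rw [← hfull]
    refine (sum_subset (range_subset_range.2 (by omega)) fun r hrN hr => ?_).symm
    rw [mem_range] at hrN hr
    rw [hηZneg _ (by omega), zero_mul]

end ConvolutionInverse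

theorem neg_one_pow_triangle_mul_neg_one_pow_triangle {R : Type*} [Monoid R] [HasDistribNeg R]
    (m : ℕ) : (-1 : R) ^ ((m + 1) * (m + 1 + 1) / 2) * (-1) ^ (m * (m - 1) / 2) = -1 := by
  have htri : (m + 1) * (m + 1 + 1) / 2 = m * (m - 1) / 2 + (2 * m + 1) := by
    have h2 : (m + 1) * (m + 1 + 1) = m * (m - 1) + 2 * (2 * m + 1) := by
      rcases m with _ | k
      · rfl
      · rw [Nat.add_sub_cancel]; ring
    rw [h2, Nat.add_mul_div_left _ _ two_pos]
  rw [htri, pow_add, (odd_two_mul_add_one m).neg_one_pow, mul_neg_one, neg_mul, ← pow_add,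
    Even.neg_one_pow ⟨_, rfl⟩]

section Hankel

variable {A : Type*} [CommRing A] {η η' : ℕ → A} {ηZ : ℤ → A}

theorem hankel_mulVec_rev (hη0 : η 0 = 1) (hηZ : ∀ i : ℕ, ηZ (i : ℤ) = η i)
    (hηZneg : ∀ m : ℤ, m < 0 → ηZ m = 0)
    (hconv : ∀ k : ℕ, 1 ≤ k → ∑ i ∈ range (k + 1), η i * η' (k - i) = 0) (m : ℕ) :
    (of fun p q : Fin (m + 1) => ηZ ((p : ℤ) + (q : ℤ) + 2 - ((m + 1 : ℕ) : ℤ))) *ᵥ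
      (fun q => η' q.rev) = Pi.single (Fin.last m) (-η' (m + 1)) := by
  ext p
  rw [mulVec, dotProduct, ← Equiv.sum_comp Fin.revPerm]
  simp only [Fin.revPerm_apply, Fin.rev_rev, of_apply]
  have hentry : ∀ r : Fin (m + 1),
      ηZ ((p : ℤ) + ((r.rev : ℕ) : ℤ) + 2 - ((m + 1 : ℕ) : ℤ)) = ηZ ((p : ℕ) + 1 - (r : ℕ)) := by
    intro r
    rw [Fin.val_rev]
    congr 1
    omega
  simp only [hentry]
  rw [Fin.sum_univ_eq_sum_range (fun r => ηZ ((p : ℕ) + 1 - r) * η' r),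
    sum_range_succ_sub_mul hη0 hηZ hηZneg hconv p.isLt, Pi.single_apply]
  exact if_congr (by simp [Fin.ext_iff]) rfl rfl

theorem det_hankel_submatrix_castSucc (hη0 : η 0 = 1) (hηZ : ∀ i : ℕ, ηZ (i : ℤ) = η i)
    (hηZneg : ∀ m : ℤ, m < 0 → ηZ m = 0) (m : ℕ) :
    ((of fun p q : Fin (m + 1) => ηZ ((p : ℤ) + (q : ℤ) + 2 - ((m + 1 : ℕ) : ℤ))).submatrix
      Fin.castSucc Fin.castSucc).det = (-1) ^ (m * (m - 1) / 2) := by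
  refine (det_of_eq_zero_above_antidiagonal _ fun p q h => hηZneg _ ?_).trans ?_
  · rw [Fin.val_castSucc, Fin.val_castSucc]; omega
  have hdiag : ∀ i : Fin m,
      ηZ ((i.castSucc : ℕ) + ((i.rev.castSucc : ℕ) : ℤ) + 2 - ((m + 1 : ℕ) : ℤ)) = 1 := by
    intro i
    rw [Fin.val_castSucc, Fin.val_castSucc, Fin.val_rev, ← hη0, ← hηZ]
    congr 1
    omega
  simp only [hdiag, prod_const_one, mul_one]

end Hankel

/-- Let `A` be a commutative ring and `(η_i)_{i ≥ 0}` a sequence in `A` with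
`η_0 = 1` (extended by `0` in negative degrees, via `ηZ`), and let `(η'_i)_{i ≥ 0}` be its
convolution inverse.  Then for every `n ≥ 1`,
`η'_n = (−1)^{n(n+1)/2} · det H_n`, where `H_n` is the `n × n` matrix with entries
`(H_n)_{p,q} = η_{p+q+2−n}` for `0 ≤ p, q ≤ n−1`. -/
theorem stmt0 (A : Type*) [CommRing A] (η η' : ℕ → A) (ηZ : ℤ → A)
    (hη0 : η 0 = 1)
    (hηZ : ∀ i : ℕ, ηZ (i : ℤ) = η i) (hηZneg : ∀ m : ℤ, m < 0 → ηZ m = 0)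
    (hη'0 : η' 0 = 1)
    (hconv : ∀ k : ℕ, 1 ≤ k → ∑ i ∈ Finset.range (k + 1), η i * η' (k - i) = 0)
    (n : ℕ) (hn : 1 ≤ n) :
    η' n = (-1 : A) ^ (n * (n + 1) / 2) *
      (Matrix.of fun p q : Fin n => ηZ ((p : ℤ) + (q : ℤ) + 2 - (n : ℤ))).det := by
  obtain ⟨m, rfl⟩ : ∃ m, n = m + 1 := ⟨n - 1, by omega⟩
  have hdet := det_mul_apply_last_of_mulVec_eq_single _
    (hankel_mulVec_rev hη0 hηZ hηZneg hconv m)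
  rw [det_hankel_submatrix_castSucc hη0 hηZ hηZneg, Fin.rev_last, Fin.val_zero, hη'0,
    mul_one] at hdet
  rw [hdet]
  linear_combination η' (m + 1) * neg_one_pow_triangle_mul_neg_one_pow_triangle (R := A) m
end

section
/- Let R be a commutative ring. If u ∈ R[[X]] is a unit of the formal power series ring R[[X]] and v ∈ R[[X]] is nilpotent, then the element u·X + v is a non-zero-divisor of R[[X]]. (This is the non-zero-divisor criterion used in the paper's proof of the formula for the fundamental class of the diagonal of P^n × P^n.) -/
open scoped nonZeroDivisors

theorem add_mem_nonZeroDivisors_of_isNilpotent {R : Type*} [CommRing R] {a b : R}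
    (ha : a ∈ R⁰) (hb : IsNilpotent b) : a + b ∈ R⁰ := by
  obtain ⟨n, hn⟩ := hb
  -- `a + b = a - (-b)` divides `a ^ n - (-b) ^ n = a ^ n`, a non-zero-divisor.
  obtain ⟨c, hc⟩ : a + b ∣ a ^ n := by
    have h := sub_dvd_pow_sub_pow a (-b) n
    rwa [sub_neg_eq_add, neg_pow, hn, mul_zero, sub_zero] at h
  exact (mul_mem_nonZeroDivisors.mp (hc ▸ pow_mem ha n)).1

theorem PowerSeries.X_mem_nonZeroDivisors {R : Type*} [Semiring R] :
    (PowerSeries.X : PowerSeries R) ∈ (PowerSeries R)⁰ :=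
  IsRegular.mem_nonZeroDivisors ⟨PowerSeries.X_mul_injective, PowerSeries.mul_X_injective⟩

/-- Let `R` be a commutative ring.  If `u ∈ R[[X]]` is a unit of the formal power
series ring and `v ∈ R[[X]]` is nilpotent, then `u·X + v` is a non-zero-divisor of `R[[X]]`. -/
theorem stmt6 (R : Type*) [CommRing R] (u v : PowerSeries R)
    (hu : IsUnit u) (hv : IsNilpotent v) :
    (u * PowerSeries.X + v) ∈ nonZeroDivisors (PowerSeries R) :=
  add_mem_nonZeroDivisors_of_isNilpotent
    (mul_mem hu.mem_nonZeroDivisors PowerSeries.X_mem_nonZeroDivisors) hv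
end
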